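/- Let c ≥ 1 be a real number. For every positive integer k, every positive integer m with m ≤ c^k, and all nonnegative random variables T_1, …, T_m on a common probability space such that for every i and every real t ≥ 0 the probability that T_i > t is at most the probability that the Gamma distribution with shape k and rate 1 assigns to (t, ∞), the expectation of max_{1≤i≤m} T_i is at most (6 + 2·ln c)·k; in particular it is O(k) with the implied constant depending only on c. -/

import Mathlib

open MeasureTheory ProbabilityTheory
open scoped ENNReal NNReal

lemma gammaPDFReal_le (k : ℕ) (hk : 0 < k) {x : ℝ} (hx : 0 ≤ x) :
    gammaPDFReal k 1 x ≤ 2 ^ (k - 1) * Real.exp (-(2⁻¹ * x)) := by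
  obtain ⟨n, rfl⟩ : ∃ n, k = n + 1 := ⟨k - 1, (Nat.succ_pred_eq_of_pos hk).symm⟩
  rw [gammaPDFReal, if_pos hx]
  have h1 : ((n + 1 : ℕ) : ℝ) = (n : ℝ) + 1 := by push_cast; ring
  rw [h1, Real.Gamma_nat_eq_factorial]
  have h2 : x ^ ((n : ℝ) + 1 - 1) = x ^ n := by
    rw [add_sub_cancel_right, Real.rpow_natCast]
  rw [h2, Real.one_rpow, one_div, one_mul]
  have key : (x / 2) ^ n / (Nat.factorial n) ≤ Real.exp (x / 2) :=
    Real.pow_div_factorial_le_exp (x := x/2) (by positivity) n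
  have hxn : x ^ n = 2 ^ n * ((x / 2) ^ n) := by
    rw [div_pow]; field_simp
  have hexp : Real.exp (x / 2) * Real.exp (-x) = Real.exp (-(2⁻¹ * x)) := by
    rw [← Real.exp_add]; ring_nf
  calc (((Nat.factorial n) : ℝ))⁻¹ * x ^ n * Real.exp (-x)
      = (x / 2) ^ n / (Nat.factorial n) * Real.exp (-x) * 2 ^ n := by rw [hxn]; ring
    _ ≤ Real.exp (x / 2) * Real.exp (-x) * 2 ^ n := by
        apply mul_le_mul_of_nonneg_right _ (by positivity)
        exact mul_le_mul_of_nonneg_right key (Real.exp_nonneg _)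
    _ = 2 ^ n * Real.exp (-(2⁻¹ * x)) := by rw [hexp]; ring
  -- note : (n+1) - 1 = n in ℕ handled by simp

lemma expIntIoi (t : ℝ) :
    (∫ x in Set.Ioi t, Real.exp (-(2⁻¹ * x))) = 2 * Real.exp (-(t / 2)) := by
  have h := integral_comp_mul_left_Ioi (fun x => Real.exp (-x)) t
    (show (0:ℝ) < 2⁻¹ by norm_num)
  simp only [smul_eq_mul, integral_exp_neg_Ioi, inv_inv] at h
  rw [h]
  congr 1
  ring

lemma gammaTail_le (k : ℕ) (hk : 0 < k) {t : ℝ} (ht : 0 ≤ t) :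
    gammaMeasure k 1 (Set.Ioi t) ≤ ENNReal.ofReal (2 ^ k * Real.exp (-(t / 2))) := by
  rw [gammaMeasure, withDensity_apply _ measurableSet_Ioi]
  have hint : MeasureTheory.IntegrableOn
      (fun x => (2:ℝ) ^ (k-1) * Real.exp (-(2⁻¹ * x))) (Set.Ioi t) := by
    apply MeasureTheory.Integrable.const_mul
    simpa [MeasureTheory.IntegrableOn] using exp_neg_integrableOn_Ioi t (by norm_num : (0:ℝ) < 2⁻¹)
  calc ∫⁻ x in Set.Ioi t, gammaPDF k 1 x
      ≤ ∫⁻ x in Set.Ioi t, ENNReal.ofReal ((2:ℝ) ^ (k-1) * Real.exp (-(2⁻¹ * x))) := by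
        refine setLIntegral_mono (by fun_prop) fun x hx => ?_
        exact ENNReal.ofReal_le_ofReal (gammaPDFReal_le k hk (le_trans ht (le_of_lt hx)))
    _ = ENNReal.ofReal (∫ x in Set.Ioi t, (2:ℝ) ^ (k-1) * Real.exp (-(2⁻¹ * x))) :=
        (ofReal_integral_eq_lintegral_ofReal hint (ae_of_all _ fun x => by positivity)).symm
    _ = ENNReal.ofReal ((2:ℝ) ^ k * Real.exp (-(t / 2))) := by
        rw [MeasureTheory.integral_const_mul, expIntIoi, ← mul_assoc,
          show (2:ℝ) ^ (k-1) * 2 = 2 ^ k by rw [← pow_succ, Nat.sub_add_cancel hk]]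

/-- **Expected completion time of `m ≤ c^k` parallel sequences of `k` unit-rate steps.**
If each of `m ≤ c^k` nonnegative random times `T i` is tail-dominated by the Gamma
distribution with shape `k` and rate 1 (the distribution of a sum of `k` independent
rate-1 exponentials), then the expected maximum of the `T i` is at most
`(6 + 2 ln c) * k`, i.e. `O(k)` with the constant depending only on `c`. -/
theorem expected_max_le_of_gamma_tail_dominated
    {Ω : Type*} [MeasurableSpace Ω] (μ : Measure Ω) [IsProbabilityMeasure μ]
    (c : ℝ) (hc : 1 ≤ c) (k m : ℕ) (hk : 0 < k) (hm : 0 < m) (hmc : (m : ℝ) ≤ c ^ k)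
    (T : Fin m → Ω → ℝ) (hmeas : ∀ i, Measurable (T i)) (hT0 : ∀ i ω, 0 ≤ T i ω)
    (htail : ∀ i, ∀ t : ℝ, 0 ≤ t →
      μ {ω | t < T i ω} ≤ gammaMeasure k 1 (Set.Ioi t)) :
    ∫ ω, (⨆ i, T i ω) ∂μ ≤ (6 + 2 * Real.log c) * k := by
  haveI : Nonempty (Fin m) := ⟨⟨0, hm⟩⟩
  set M : Ω → ℝ := fun ω => ⨆ i, T i ω with hMdef
  have hMmeas : Measurable M := Measurable.iSup hmeas
  have hbdd : ∀ ω, BddAbove (Set.range fun i => T i ω) :=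
    fun ω => (Set.finite_range _).bddAbove
  have hM0 : ∀ ω, 0 ≤ M ω := fun ω =>
    le_trans (hT0 ⟨0, hm⟩ ω) (le_ciSup (hbdd ω) ⟨0, hm⟩)
  have hrep : ∫ ω, M ω ∂μ = (∫⁻ t in Set.Ioi 0, μ {ω | t < M ω}).toReal := by
    rw [MeasureTheory.integral_eq_lintegral_of_nonneg_ae (ae_of_all _ hM0)
        hMmeas.aestronglyMeasurable,
      MeasureTheory.lintegral_eq_lintegral_meas_lt μ (ae_of_all _ hM0) hMmeas.aemeasurable]
  set a : ℝ := 2 * k * Real.log (2 * c) with ha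
  have hc2 : (1:ℝ) ≤ 2 * c := by linarith
  have hlog : 0 ≤ Real.log (2 * c) := Real.log_nonneg hc2
  have ha0 : 0 ≤ a := by positivity
  have h2ck : (0:ℝ) < (2 * c) ^ k := pow_pos (by linarith) k
  have htailM : ∀ t : ℝ, 0 ≤ t →
      μ {ω | t < M ω} ≤ ENNReal.ofReal ((2 * c) ^ k * Real.exp (-(t / 2))) := by
    intro t ht
    have hset : {ω | t < M ω} = ⋃ i, {ω | t < T i ω} := by
      ext ω
      simp only [hMdef, Set.mem_setOf_eq, Set.mem_iUnion]
      exact lt_ciSup_iff (hbdd ω)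
    rw [hset]
    calc μ (⋃ i, {ω | t < T i ω}) ≤ ∑ i : Fin m, μ {ω | t < T i ω} := by
          exact measure_iUnion_fintype_le μ _
      _ ≤ ∑ _i : Fin m, ENNReal.ofReal ((2:ℝ) ^ k * Real.exp (-(t / 2))) :=
          Finset.sum_le_sum fun i _ => (htail i t ht).trans (gammaTail_le k hk ht)
      _ = (m : ℝ≥0∞) * ENNReal.ofReal ((2:ℝ) ^ k * Real.exp (-(t / 2))) := by
          rw [Finset.sum_const, Finset.card_univ, Fintype.card_fin, nsmul_eq_mul]
      _ ≤ ENNReal.ofReal ((2 * c) ^ k * Real.exp (-(t / 2))) := by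
          rw [← ENNReal.ofReal_natCast m, ← ENNReal.ofReal_mul (by positivity)]
          apply ENNReal.ofReal_le_ofReal
          rw [← mul_assoc, mul_pow]
          apply mul_le_mul_of_nonneg_right _ (Real.exp_nonneg _)
          rw [show (2:ℝ) ^ k * c ^ k = c ^ k * 2 ^ k by ring]
          exact mul_le_mul_of_nonneg_right hmc (by positivity)
  have hsplit : (∫⁻ t in Set.Ioi 0, μ {ω | t < M ω}) ≤ ENNReal.ofReal (a + 2) := by
    rw [← Set.Ioc_union_Ioi_eq_Ioi ha0,
      MeasureTheory.lintegral_union measurableSet_Ioi Set.Ioc_disjoint_Ioi_same]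
    have h1 : (∫⁻ t in Set.Ioc 0 a, μ {ω | t < M ω}) ≤ ENNReal.ofReal a := by
      calc (∫⁻ t in Set.Ioc 0 a, μ {ω | t < M ω}) ≤ ∫⁻ _ in Set.Ioc 0 a, 1 :=
            MeasureTheory.lintegral_mono fun t => prob_le_one
        _ = ENNReal.ofReal a := by
            rw [MeasureTheory.setLIntegral_one, Real.volume_Ioc, sub_zero]
    have h2 : (∫⁻ t in Set.Ioi a, μ {ω | t < M ω}) ≤ ENNReal.ofReal 2 := by
      have hint2 : MeasureTheory.IntegrableOn
          (fun t => (2 * c) ^ k * Real.exp (-(2⁻¹ * t))) (Set.Ioi a) := by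
        apply MeasureTheory.Integrable.const_mul
        simpa [MeasureTheory.IntegrableOn] using exp_neg_integrableOn_Ioi a (by norm_num : (0:ℝ) < 2⁻¹)
      have heq : ∀ t : ℝ, -(t / 2) = -(2⁻¹ * t) := fun t => by ring
      calc (∫⁻ t in Set.Ioi a, μ {ω | t < M ω})
          ≤ ∫⁻ t in Set.Ioi a, ENNReal.ofReal ((2 * c) ^ k * Real.exp (-(2⁻¹ * t))) := by
            refine setLIntegral_mono (by fun_prop) fun t htt => ?_
            rw [← heq t]
            exact htailM t (le_trans ha0 (le_of_lt htt))
        _ = ENNReal.ofReal (∫ t in Set.Ioi a, (2 * c) ^ k * Real.exp (-(2⁻¹ * t))) :=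
            (ofReal_integral_eq_lintegral_ofReal hint2
              (ae_of_all _ fun t => by positivity)).symm
        _ = ENNReal.ofReal 2 := by
            congr 1
            rw [MeasureTheory.integral_const_mul, expIntIoi]
            have hexp : Real.exp (-(a / 2)) = ((2 * c) ^ k)⁻¹ := by
              rw [ha, show 2 * (k : ℝ) * Real.log (2 * c) / 2 = k * Real.log (2 * c) by ring,
                Real.exp_neg, Real.exp_nat_mul, Real.exp_log (by linarith)]
            rw [hexp]
            field_simp
    calc (∫⁻ t in Set.Ioc 0 a, μ {ω | t < M ω}) + ∫⁻ t in Set.Ioi a, μ {ω | t < M ω}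
        ≤ ENNReal.ofReal a + ENNReal.ofReal 2 := add_le_add h1 h2
      _ = ENNReal.ofReal (a + 2) := by rw [← ENNReal.ofReal_add ha0 (by norm_num)]
  have hfin : ∫ ω, M ω ∂μ ≤ a + 2 := by
    rw [hrep]
    exact ENNReal.toReal_le_of_le_ofReal (by linarith) hsplit
  refine hfin.trans ?_
  have hlog2 : Real.log 2 ≤ 1 := by
    have := Real.log_le_sub_one_of_pos (show (0:ℝ) < 2 by norm_num)
    linarith
  have hlogc : 0 ≤ Real.log c := Real.log_nonneg hc
  have hk1 : (1:ℝ) ≤ k := by exact_mod_cast hk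
  rw [ha, Real.log_mul (by norm_num) (by linarith)]
  nlinarith [hk1, hlog2, hlogc]
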